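/- If ν ≥ 0 and x ∈ (0,1], then 2 J_ν(x) − x J_{ν+1}(x) > 0. Consequently the smallest positive zero β_{ν,1} of the Dini function z ↦ (2−ν)J_ν(z) + z J_ν'(z) = 2J_ν(z) − z J_{ν+1}(z) satisfies β_{ν,1} > 1. -/

import Mathlib

/-!
Write `J_ν(z) = ∑ cₙ (z/2)^(2n+ν)` with `cₙ = (-1)ⁿ / (n! Γ(n+ν+1))`. Since the coefficients of
`J_{ν+1}` are `-(n+1) cₙ₊₁`, the series of `2 J_ν(z) - z J_{ν+1}(z)` is `∑ 2(n+1) cₙ (z/2)^(2n+ν)`;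
differentiating termwise on `0 < re z` (on small balls the derivative series is dominated by a
convergent series) gives `z J_ν'(z) = ν J_ν(z) - z J_{ν+1}(z)`, so the Dini function
`(2-ν) J_ν + z J_ν'` is `2 J_ν - z J_{ν+1}`.

For real `x` with `x² < 2` this series is `2 (x/2)^ν ∑ (-1)ⁿ tₙ` with `tₙ = (n+1) |cₙ| (x/2)^(2n)`,
and `tₙ₊₁ ≤ (x²/2) tₙ`. An alternating series with decreasing terms is at least `t₀ - t₁ > 0`.
-/

open Complex

/-- The Bessel function of the first kind of real order `ν`, defined for complex `z`
by its power series, with all complex powers taken with the principal branch. -/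
noncomputable def besselJ (ν : ℝ) (z : ℂ) : ℂ :=
  ∑' n : ℕ, ((-1 : ℂ) ^ n / ((n.factorial : ℂ) * Complex.Gamma ((n : ℂ) + (ν : ℂ) + 1))) *
    (z / 2) ^ (2 * (n : ℂ) + (ν : ℂ))

lemma Real.rpow_two_mul_natCast_add {r : ℝ} (hr : 0 < r) (n : ℕ) (s : ℝ) :
    r ^ (2 * n + s) = (r ^ 2) ^ n * r ^ s := by
  rw [Real.rpow_add hr, ← pow_mul, ← Real.rpow_natCast]
  push_cast
  ring_nf

lemma Real.rpow_le_rpow_add_rpow {a r c : ℝ} (ha : 0 < a) (har : a ≤ r) (hrc : r ≤ c) (s : ℝ) :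
    r ^ s ≤ a ^ s + c ^ s := by
  have hr : 0 < r := ha.trans_le har
  rcases le_total 0 s with hs | hs
  · linarith [Real.rpow_le_rpow hr.le hrc hs, Real.rpow_pos_of_pos ha s]
  · linarith [Real.rpow_le_rpow_of_nonpos ha har hs, Real.rpow_pos_of_pos (hr.trans_le hrc) s]

noncomputable def besselCoeff (ν : ℝ) (n : ℕ) : ℝ :=
  (-1) ^ n / (n.factorial * Real.Gamma (n + ν + 1))

section Coeff

variable {ν : ℝ}

lemma besselCoeff_zero (ν : ℝ) : besselCoeff ν 0 = (Real.Gamma (ν + 1))⁻¹ := by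
  simp [besselCoeff]

lemma besselCoeff_succ (hν : -1 < ν) (n : ℕ) :
    besselCoeff ν (n + 1) = -besselCoeff ν n / ((n + 1) * (n + ν + 1)) := by
  have hpos : 0 < (n : ℝ) + ν + 1 := by linarith [n.cast_nonneg (α := ℝ)]
  simp only [besselCoeff, Nat.factorial_succ, Nat.cast_mul, Nat.cast_succ, pow_succ]
  rw [show (n : ℝ) + 1 + ν + 1 = (n + ν + 1) + 1 by ring, Real.Gamma_add_one hpos.ne']
  field_simp

lemma abs_besselCoeff_succ (hν : -1 < ν) (n : ℕ) :
    |besselCoeff ν (n + 1)| = |besselCoeff ν n| / ((n + 1) * (n + ν + 1)) := by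
  have hpos : 0 < ((n : ℝ) + 1) * (n + ν + 1) :=
    mul_pos (by positivity) (by linarith [n.cast_nonneg (α := ℝ)])
  rw [besselCoeff_succ hν, abs_div, abs_neg, abs_of_pos hpos]

lemma besselCoeff_add_one (ν : ℝ) (n : ℕ) :
    besselCoeff (ν + 1) n = -(n + 1) * besselCoeff ν (n + 1) := by
  simp only [besselCoeff, Nat.factorial_succ, Nat.cast_mul, Nat.cast_succ, pow_succ]
  rw [show (n : ℝ) + 1 + ν + 1 = n + (ν + 1) + 1 by ring]
  field_simp

lemma besselCoeff_eq_neg_one_pow_mul_abs (hν : -1 < ν) (n : ℕ) :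
    besselCoeff ν n = (-1) ^ n * |besselCoeff ν n| := by
  have hΓ : 0 < Real.Gamma (n + ν + 1) :=
    Real.Gamma_pos_of_pos (by linarith [n.cast_nonneg (α := ℝ)])
  rw [besselCoeff, abs_div, abs_pow, abs_neg, abs_one, one_pow,
    abs_of_pos (by positivity : (0 : ℝ) < n.factorial * Real.Gamma (n + ν + 1))]
  ring

lemma abs_besselCoeff_le (hν : 0 ≤ ν) (n : ℕ) :
    |besselCoeff ν n| ≤ (Real.Gamma (ν + 1))⁻¹ / n.factorial := by
  have hΓ : 0 < Real.Gamma (ν + 1) := Real.Gamma_pos_of_pos (by linarith)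
  induction n with
  | zero => simp [besselCoeff_zero, abs_of_pos hΓ]
  | succ n ih =>
    have hn : (1 : ℝ) ≤ n + ν + 1 := by linarith [n.cast_nonneg (α := ℝ)]
    calc |besselCoeff ν (n + 1)| = |besselCoeff ν n| / ((n + 1) * (n + ν + 1)) :=
          abs_besselCoeff_succ (by linarith) n
      _ ≤ |besselCoeff ν n| / ((n + 1) * 1) := by gcongr
      _ ≤ (Real.Gamma (ν + 1))⁻¹ / n.factorial / (n + 1) := by rw [mul_one]; gcongr
      _ = (Real.Gamma (ν + 1))⁻¹ / (n + 1).factorial := by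
          rw [Nat.factorial_succ, Nat.cast_mul, Nat.cast_succ, div_div, mul_comm]

lemma summable_besselMajorant (hν : 0 ≤ ν) {r : ℝ} (hr : 0 ≤ r) :
    Summable fun n : ℕ => (n + 1) * r ^ n * |besselCoeff ν n| := by
  refine .of_nonneg_of_le (fun n => by positivity) (fun n => ?_)
    ((Real.summable_pow_div_factorial (2 * r)).mul_left (Real.Gamma (ν + 1))⁻¹)
  have h2 : (n : ℝ) + 1 ≤ 2 ^ n := by exact_mod_cast n.lt_two_pow_self
  calc (n + 1) * r ^ n * |besselCoeff ν n|
      ≤ 2 ^ n * r ^ n * ((Real.Gamma (ν + 1))⁻¹ / n.factorial) := by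
        gcongr
        exact abs_besselCoeff_le hν n
    _ = (Real.Gamma (ν + 1))⁻¹ * ((2 * r) ^ n / n.factorial) := by ring

lemma succ_mul_pow_mul_abs_besselCoeff_succ_le (hν : 0 ≤ ν) {r : ℝ} (hr : 0 ≤ r) (n : ℕ) :
    ((n + 1 : ℕ) + 1) * r ^ (n + 1) * |besselCoeff ν (n + 1)| ≤
      2 * r * ((n + 1) * r ^ n * |besselCoeff ν n|) := by
  have hn : (1 : ℝ) ≤ n + ν + 1 := by linarith [n.cast_nonneg (α := ℝ)]
  have hratio : ((n : ℝ) + 1 + 1) * (|besselCoeff ν n| / ((n + 1) * (n + ν + 1))) ≤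
      2 * (n + 1) * |besselCoeff ν n| := by
    have h : (n : ℝ) + 1 + 1 ≤ 2 * (n + 1) * ((n + 1) * (n + ν + 1)) := by
      have := le_mul_of_one_le_right (by positivity : (0 : ℝ) ≤ n + 1) hn
      nlinarith [n.cast_nonneg (α := ℝ)]
    rw [mul_div_assoc', div_le_iff₀ (by positivity)]
    nlinarith [mul_le_mul_of_nonneg_right h (abs_nonneg (besselCoeff ν n))]
  calc ((n + 1 : ℕ) + 1) * r ^ (n + 1) * |besselCoeff ν (n + 1)|
      = r ^ n * r * ((n + 1 + 1) * (|besselCoeff ν n| / ((n + 1) * (n + ν + 1)))) := by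
        rw [abs_besselCoeff_succ (by linarith), Nat.cast_succ, pow_succ]; ring
    _ ≤ r ^ n * r * (2 * (n + 1) * |besselCoeff ν n|) := by gcongr
    _ = 2 * r * ((n + 1) * r ^ n * |besselCoeff ν n|) := by ring

lemma tsum_succ_mul_besselCoeff_mul_pow_pos (hν : 0 ≤ ν) {r : ℝ} (hr₀ : 0 ≤ r)
    (hr : r < 1 / 2) :
    0 < ∑' n : ℕ, (n + 1) * besselCoeff ν n * r ^ n := by
  let f : ℕ → ℝ := fun n => (n + 1) * r ^ n * |besselCoeff ν n|
  have hf_succ (n : ℕ) : f (n + 1) ≤ 2 * r * f n :=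
    succ_mul_pow_mul_abs_besselCoeff_succ_le hν hr₀ n
  have hf_zero : 0 < f 0 := by
    simp [f, besselCoeff_zero, (Real.Gamma_pos_of_pos (by linarith : 0 < ν + 1)).ne']
  have hf_anti : Antitone f := antitone_nat_of_succ_le fun n => by
    nlinarith [hf_succ n, (by positivity : 0 ≤ f n)]
  have hsum : ∑' n : ℕ, (n + 1) * besselCoeff ν n * r ^ n = ∑' n, (-1) ^ n * f n :=
    tsum_congr fun n => by rw [besselCoeff_eq_neg_one_pow_mul_abs (by linarith) n]; ring
  have hlower := hf_anti.alternating_series_le_tendsto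
    (show Summable f from summable_besselMajorant hν hr₀).tendsto_alternating_series_tsum 1
  norm_num [Finset.sum_range_succ] at hlower
  have hf_one : f 1 ≤ 2 * r * f 0 := hf_succ 0
  rw [hsum]
  nlinarith [mul_pos hf_zero (by linarith : (0 : ℝ) < 1 - 2 * r)]

end Coeff

noncomputable def besselTerm (ν : ℝ) (n : ℕ) (z : ℂ) : ℂ :=
  besselCoeff ν n * (z / 2) ^ ((2 * n + ν : ℝ) : ℂ)

noncomputable def besselTermDeriv (ν : ℝ) (n : ℕ) (z : ℂ) : ℂ :=
  besselCoeff ν n * ((2 * n + ν : ℝ) * (z / 2) ^ (((2 * n + ν : ℝ) : ℂ) - 1) * (1 / 2))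

section Series

variable {ν : ℝ} {z : ℂ}

lemma besselJ_eq_tsum_besselTerm (ν : ℝ) (z : ℂ) : besselJ ν z = ∑' n, besselTerm ν n z := by
  unfold besselJ besselTerm besselCoeff
  congr 1 with n
  push_cast [← Complex.Gamma_ofReal]
  rfl

lemma norm_besselTerm (ν : ℝ) (n : ℕ) (hz : z ≠ 0) :
    ‖besselTerm ν n z‖ = ‖z / 2‖ ^ ν * ((‖z / 2‖ ^ 2) ^ n * |besselCoeff ν n|) := by
  rw [besselTerm, norm_mul, Complex.norm_real, Real.norm_eq_abs, Complex.norm_cpow_real,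
    Real.rpow_two_mul_natCast_add (by simpa using hz)]
  ring

lemma hasSum_besselTerm (hν : 0 ≤ ν) (hz : z ≠ 0) :
    HasSum (fun n => besselTerm ν n z) (besselJ ν z) := by
  rw [besselJ_eq_tsum_besselTerm]
  refine Summable.hasSum (.of_norm_bounded
    ((summable_besselMajorant hν (sq_nonneg ‖z / 2‖)).mul_left (‖z / 2‖ ^ ν)) fun n => ?_)
  rw [norm_besselTerm ν n hz]
  gcongr
  exact le_mul_of_one_le_left (by positivity) (by linarith [n.cast_nonneg (α := ℝ)])

lemma mul_besselTerm_add_one (ν : ℝ) (n : ℕ) (hz : z ≠ 0) :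
    z * besselTerm (ν + 1) n z = -(2 * (n + 1)) * besselTerm ν (n + 1) z := by
  have hz2 : z / 2 ≠ 0 := div_ne_zero hz two_ne_zero
  have hexp : (((2 * (n + 1 : ℕ) + ν : ℝ)) : ℂ) = ((2 * n + (ν + 1) : ℝ) : ℂ) + 1 := by
    push_cast; ring
  rw [besselTerm, besselTerm, besselCoeff_add_one, hexp, Complex.cpow_add _ _ hz2,
    Complex.cpow_one]
  push_cast
  ring

lemma hasSum_two_mul_natCast_mul_besselTerm (hν : 0 ≤ ν) (hz : z ≠ 0) :
    HasSum (fun n : ℕ => 2 * n * besselTerm ν n z) (-(z * besselJ (ν + 1) z)) := by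
  have h := ((hasSum_besselTerm (by linarith : 0 ≤ ν + 1) hz).mul_left z).neg
  have hshift : HasSum (fun n : ℕ => 2 * ((n + 1 : ℕ) : ℂ) * besselTerm ν (n + 1) z)
      (-(z * besselJ (ν + 1) z)) :=
    h.congr_fun fun n => by rw [mul_besselTerm_add_one ν n hz]; push_cast; ring
  simpa using (hasSum_nat_add_iff (f := fun n : ℕ => 2 * (n : ℂ) * besselTerm ν n z) 1).1 hshift

lemma hasSum_two_mul_succ_mul_besselTerm (hν : 0 ≤ ν) (hz : z ≠ 0) :
    HasSum (fun n : ℕ => 2 * (n + 1) * besselTerm ν n z)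
      (2 * besselJ ν z - z * besselJ (ν + 1) z) := by
  have h := ((hasSum_besselTerm hν hz).mul_left 2).add
    (hasSum_two_mul_natCast_mul_besselTerm hν hz)
  rw [← sub_eq_add_neg] at h
  exact h.congr_fun fun n => by ring

end Series

section Deriv

variable {ν : ℝ} {z : ℂ}

lemma hasDerivAt_besselTerm (ν : ℝ) (n : ℕ) (hz : 0 < z.re) :
    HasDerivAt (besselTerm ν n) (besselTermDeriv ν n z) z := by
  have hslit : z / 2 ∈ Complex.slitPlane := by
    rw [Complex.mem_slitPlane_iff]
    left
    simpa [Complex.div_re] using hz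
  exact (((hasDerivAt_id z).div_const 2).cpow_const hslit).const_mul _

lemma mul_besselTermDeriv (ν : ℝ) (n : ℕ) (hz : z ≠ 0) :
    z * besselTermDeriv ν n z = (2 * n + ν) * besselTerm ν n z := by
  have hz2 : z / 2 ≠ 0 := div_ne_zero hz two_ne_zero
  rw [besselTermDeriv, besselTerm, Complex.cpow_sub _ _ hz2, Complex.cpow_one]
  field_simp
  push_cast
  ring

lemma norm_besselTermDeriv_le (hν : 0 ≤ ν) (n : ℕ) {a c : ℝ} (ha : 0 < a) (haz : a ≤ ‖z / 2‖)
    (hzc : ‖z / 2‖ ≤ c) :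
    ‖besselTermDeriv ν n z‖ ≤
      (1 + ν) * (a ^ (ν - 1) + c ^ (ν - 1)) * ((n + 1) * (c ^ 2) ^ n * |besselCoeff ν n|) := by
  have hz : 0 < ‖z / 2‖ := ha.trans_le haz
  have hexp : ((2 * n + ν : ℝ) : ℂ) - 1 = ((2 * n + (ν - 1) : ℝ) : ℂ) := by push_cast; ring
  have hnorm : ‖besselTermDeriv ν n z‖ =
      (2 * n + ν) / 2 * ‖z / 2‖ ^ (ν - 1) * ((‖z / 2‖ ^ 2) ^ n * |besselCoeff ν n|) := by
    rw [besselTermDeriv, hexp, norm_mul, norm_mul, norm_mul, Complex.norm_real, Complex.norm_real,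
      Complex.norm_cpow_real, Real.rpow_two_mul_natCast_add hz, Real.norm_eq_abs, Real.norm_eq_abs,
      abs_of_nonneg (by positivity : (0 : ℝ) ≤ 2 * n + ν)]
    norm_num
    ring
  rw [hnorm]
  have hcoef : (2 * n + ν) / 2 ≤ (1 + ν) * (n + 1) := by nlinarith [n.cast_nonneg (α := ℝ)]
  calc (2 * n + ν) / 2 * ‖z / 2‖ ^ (ν - 1) * ((‖z / 2‖ ^ 2) ^ n * |besselCoeff ν n|)
      ≤ (1 + ν) * (n + 1) * (a ^ (ν - 1) + c ^ (ν - 1)) * ((c ^ 2) ^ n * |besselCoeff ν n|) := by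
        have hc : 0 < c := hz.trans_le hzc
        gcongr
        exact Real.rpow_le_rpow_add_rpow ha haz hzc _
    _ = _ := by ring

lemma norm_half_bounds_of_mem_ball {w : ℂ} (hw : w ∈ Metric.ball z (z.re / 2)) :
    0 < w.re ∧ z.re / 4 ≤ ‖w / 2‖ ∧ ‖w / 2‖ ≤ ‖z‖ := by
  rw [Metric.mem_ball, Complex.dist_eq] at hw
  have hre : |(w - z).re| ≤ ‖w - z‖ := Complex.abs_re_le_norm _
  have hnorm : ‖w‖ ≤ ‖z‖ + ‖w - z‖ := norm_le_norm_add_norm_sub' w z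
  have hzre : z.re ≤ ‖z‖ := Complex.re_le_norm z
  have hwre : w.re ≤ ‖w‖ := Complex.re_le_norm w
  rw [Complex.sub_re, abs_le] at hre
  rw [norm_div, Complex.norm_two]
  refine ⟨by linarith, by linarith, by linarith⟩

lemma hasDerivAt_besselJ (hν : 0 ≤ ν) (hz : 0 < z.re) :
    HasDerivAt (besselJ ν) (∑' n, besselTermDeriv ν n z) z := by
  have hJ : besselJ ν = fun w => ∑' n, besselTerm ν n w := funext (besselJ_eq_tsum_besselTerm ν)
  have hz₀ : z ≠ 0 := fun h => by simp [h] at hz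
  have hmem : z ∈ Metric.ball z (z.re / 2) := Metric.mem_ball_self (by linarith)
  rw [hJ]
  exact hasDerivAt_tsum_of_isPreconnected
    ((summable_besselMajorant hν (sq_nonneg ‖z‖)).mul_left _) Metric.isOpen_ball
    (convex_ball z _).isPreconnected
    (fun n w hw => hasDerivAt_besselTerm ν n (norm_half_bounds_of_mem_ball hw).1)
    (fun n w hw => norm_besselTermDeriv_le hν n (by linarith)
      (norm_half_bounds_of_mem_ball hw).2.1 (norm_half_bounds_of_mem_ball hw).2.2)
    hmem (hasSum_besselTerm hν hz₀).summable hmem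

lemma mul_deriv_besselJ (hν : 0 ≤ ν) (hz : 0 < z.re) :
    z * deriv (besselJ ν) z = ν * besselJ ν z - z * besselJ (ν + 1) z := by
  have hz₀ : z ≠ 0 := fun h => by simp [h] at hz
  have h := ((hasSum_besselTerm hν hz₀).mul_left (ν : ℂ)).add
    (hasSum_two_mul_natCast_mul_besselTerm hν hz₀)
  rw [← sub_eq_add_neg] at h
  rw [(hasDerivAt_besselJ hν hz).deriv, ← tsum_mul_left, ← h.tsum_eq]
  exact tsum_congr fun n => by rw [mul_besselTermDeriv ν n hz₀]; ring

lemma dini_eq_two_mul_besselJ_sub_mul_besselJ_add_one (hν : 0 ≤ ν) (hz : 0 < z.re) :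
    ((2 - ν : ℝ) : ℂ) * besselJ ν z + z * deriv (besselJ ν) z =
      2 * besselJ ν z - z * besselJ (ν + 1) z := by
  rw [mul_deriv_besselJ hν hz]
  push_cast
  ring

end Deriv

lemma besselTerm_ofReal (ν : ℝ) (n : ℕ) {x : ℝ} (hx : 0 ≤ x) :
    besselTerm ν n x = ((besselCoeff ν n * (x / 2) ^ (2 * n + ν) : ℝ) : ℂ) := by
  rw [besselTerm, Complex.ofReal_mul, Complex.ofReal_cpow (by positivity)]
  push_cast
  rfl

lemma re_two_mul_besselJ_sub_mul_besselJ_add_one_pos {ν x : ℝ} (hν : 0 ≤ ν) (hx : 0 < x)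
    (hx2 : x ^ 2 < 2) :
    0 < (2 * besselJ ν x - x * besselJ (ν + 1) x).re := by
  have h := Complex.hasSum_re
    (hasSum_two_mul_succ_mul_besselTerm hν (Complex.ofReal_ne_zero.2 hx.ne'))
  have hterm (n : ℕ) : (2 * (n + 1) * besselTerm ν n x).re =
      2 * (x / 2) ^ ν * ((n + 1) * besselCoeff ν n * ((x / 2) ^ 2) ^ n) := by
    rw [besselTerm_ofReal ν n hx.le, Real.rpow_two_mul_natCast_add (by positivity),
      show 2 * ((n : ℂ) + 1) = ((2 * (n + 1) : ℝ) : ℂ) by push_cast; ring,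
      ← Complex.ofReal_mul, Complex.ofReal_re]
    ring
  rw [← h.tsum_eq, tsum_congr hterm, tsum_mul_left]
  exact mul_pos (by positivity)
    (tsum_succ_mul_besselCoeff_mul_pow_pos hν (by positivity) (by nlinarith))

theorem stmt16 (ν : ℝ) (hν : 0 ≤ ν) :
    (∀ x : ℝ, 0 < x → x ≤ 1 →
      0 < (2 * besselJ ν (x : ℂ) - (x : ℂ) * besselJ (ν + 1) (x : ℂ)).re) ∧
    ∀ b : ℝ, IsLeast {x : ℝ | 0 < x ∧
      ((2 - ν : ℝ) : ℂ) * besselJ ν (x : ℂ) + (x : ℂ) * deriv (besselJ ν) (x : ℂ) = 0} b →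
      1 < b := by
  have hpos (x : ℝ) (hx : 0 < x) (hx1 : x ≤ 1) :
      0 < (2 * besselJ ν (x : ℂ) - (x : ℂ) * besselJ (ν + 1) (x : ℂ)).re :=
    re_two_mul_besselJ_sub_mul_besselJ_add_one_pos hν hx (by nlinarith)
  refine ⟨hpos, fun b hb => ?_⟩
  obtain ⟨hb, hdini⟩ := hb.1
  by_contra! hb1
  have h := hpos b hb hb1
  rw [← dini_eq_two_mul_besselJ_sub_mul_besselJ_add_one hν (by simpa using hb), hdini,
    Complex.zero_re] at h
  exact h.false
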